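/- Let x_η denote the R_η-minimizing solution of Kx = y†. For all η₁, η₂ > 0 there holds ‖x_{η₁} − x_{η₂}‖_{ℓ²} ≤ min( ‖x_{η₁}‖_{ℓ²}/η₁ , ‖x_{η₂}‖_{ℓ²}/η₂ ) · |η₁ − η₂|; in particular η ↦ x_η is locally Lipschitz continuous on (0, ∞). -/

import Mathlib

/-!
Minimality of `x_η` over the convex solution set gives, by comparing with the segment towards
another solution `z`, the variational inequality `η‖x_η‖₁ ≤ η‖z‖₁ + ⟪x_η, z - x_η⟫`. Testing it
for `η₁` against `z = x_{η₂}` and for `η₂` against `z = x_{η₁}`, with weights `η₂` and `η₁`,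
cancels the `ℓ¹` terms and leaves `η₂‖x₁ - x₂‖² ≤ (η₁ - η₂)⟪x₂, x₁ - x₂⟫`; Cauchy–Schwarz
finishes. Near `η` this bound keeps `‖x_c‖ ≤ (3/2)‖x_η‖`, which gives the local Lipschitz constant.
-/

noncomputable section

open Filter Topology

/-- `ℓ²(ℕ, ℝ)`. -/
abbrev ltwo : Type := lp (fun _ : ℕ => ℝ) 2

/-- `x ∈ ℓ¹`. -/
def inL1 (x : ltwo) : Prop := Memℓp (fun i => x i) 1

/-- The `ℓ¹`-norm `‖x‖_{ℓ¹} = ∑ |xᵢ|` (junk value if `x ∉ ℓ¹`). -/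
noncomputable def l1norm (x : ltwo) : ℝ := ∑' i, |x i|

/-- The functional `R_η(x) = η‖x‖₁ + ½‖x‖₂²` (finite on `ℓ¹ ∩ ℓ²`). -/
noncomputable def Rfun (η : ℝ) (x : ltwo) : ℝ := η * l1norm x + (1 / 2) * ‖x‖ ^ 2

/-- `x†` is the `R_η`-minimizing solution of `Kx = y†`: it solves the equation and
minimizes `R_η` among all solutions in `ℓ¹ ∩ ℓ²`. -/
def IsRMinSolution {H : Type*} [NormedAddCommGroup H] [InnerProductSpace ℝ H]
    (K : ltwo →L[ℝ] H) (ydag : H) (η : ℝ) (xdag : ltwo) : Prop :=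
  inL1 xdag ∧ K xdag = ydag ∧
    ∀ z : ltwo, inL1 z → K z = ydag → Rfun η xdag ≤ Rfun η z

section VariationalInequality

variable {E : Type*} [SeminormedAddCommGroup E] [InnerProductSpace ℝ E] {s : Set E}

lemma norm_add_smul_sq (x w : E) (t : ℝ) :
    ‖x + t • w‖ ^ 2 = ‖x‖ ^ 2 + 2 * t * inner ℝ x w + t ^ 2 * ‖w‖ ^ 2 := by
  rw [norm_add_sq_real, real_inner_smul_right, norm_smul, mul_pow, Real.norm_eq_abs, sq_abs]
  ring

lemma IsMinOn.le_add_inner_of_convexOn {f : E → ℝ} {x z : E}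
    (hmin : IsMinOn (fun y => f y + 1 / 2 * ‖y‖ ^ 2) s x) (hf : ConvexOn ℝ s f)
    (hx : x ∈ s) (hz : z ∈ s) : f x ≤ f z + inner ℝ x (z - x) := by
  set d := f x - f z - inner ℝ x (z - x)
  have hsegment : ∀ t ∈ Set.Ioc (0 : ℝ) 1, d ≤ t * (‖z - x‖ ^ 2 / 2) := by
    rintro t ⟨ht0, ht1⟩
    have hconv : f (x + t • (z - x)) ≤ (1 - t) * f x + t * f z := by
      have h := hf.2 hx hz (sub_nonneg.2 ht1) ht0.le (sub_add_cancel 1 t)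
      rwa [show (1 - t) • x + t • z = x + t • (z - x) by module] at h
    have hle := isMinOn_iff.1 hmin _ (hf.1.add_smul_sub_mem hx hz ⟨ht0.le, ht1⟩)
    rw [norm_add_smul_sq] at hle
    have : t * d ≤ t * (t * (‖z - x‖ ^ 2 / 2)) := by simp only [d]; nlinarith
    exact le_of_mul_le_mul_left this ht0
  have hlim : Tendsto (fun t : ℝ => t * (‖z - x‖ ^ 2 / 2)) (𝓝[>] 0) (𝓝 0) := by
    have h := (tendsto_id (x := 𝓝 (0 : ℝ))).mul_const (‖z - x‖ ^ 2 / 2)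
    rw [zero_mul] at h
    exact h.mono_left nhdsWithin_le_nhds
  have hd : d ≤ 0 := ge_of_tendsto hlim (eventually_of_mem (Ioc_mem_nhdsGT zero_lt_one) hsegment)
  simp only [d] at hd
  linarith

lemma norm_sub_le_of_isMinOn {φ : E → ℝ} (hφ : ConvexOn ℝ s φ) {η₁ η₂ : ℝ} (hη₁ : 0 ≤ η₁)
    (hη₂ : 0 < η₂) {x₁ x₂ : E} (hx₁ : x₁ ∈ s) (hx₂ : x₂ ∈ s)
    (hmin₁ : IsMinOn (fun y => η₁ * φ y + 1 / 2 * ‖y‖ ^ 2) s x₁)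
    (hmin₂ : IsMinOn (fun y => η₂ * φ y + 1 / 2 * ‖y‖ ^ 2) s x₂) :
    ‖x₁ - x₂‖ ≤ ‖x₂‖ / η₂ * |η₁ - η₂| := by
  have hvar₁ := hmin₁.le_add_inner_of_convexOn (hφ.smul hη₁) hx₁ hx₂
  have hvar₂ := hmin₂.le_add_inner_of_convexOn (hφ.smul hη₂.le) hx₂ hx₁
  have hinner : inner ℝ x₁ (x₂ - x₁) = -(‖x₁ - x₂‖ ^ 2 + inner ℝ x₂ (x₁ - x₂)) := by
    rw [← neg_sub, inner_neg_right, ← real_inner_self_eq_norm_sq, ← inner_add_left,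
      sub_add_cancel]
  have hsq : η₂ * ‖x₁ - x₂‖ ^ 2 ≤ (η₁ - η₂) * inner ℝ x₂ (x₁ - x₂) := by
    rw [hinner] at hvar₁
    linarith [mul_le_mul_of_nonneg_left hvar₁ hη₂.le, mul_le_mul_of_nonneg_left hvar₂ hη₁]
  have hcs : (η₁ - η₂) * inner ℝ x₂ (x₁ - x₂) ≤ |η₁ - η₂| * ‖x₂‖ * ‖x₁ - x₂‖ :=
    calc (η₁ - η₂) * inner ℝ x₂ (x₁ - x₂) ≤ |η₁ - η₂| * |inner ℝ x₂ (x₁ - x₂)| := by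
          rw [← abs_mul]; exact le_abs_self _
      _ ≤ |η₁ - η₂| * (‖x₂‖ * ‖x₁ - x₂‖) := by gcongr; exact abs_real_inner_le_norm _ _
      _ = |η₁ - η₂| * ‖x₂‖ * ‖x₁ - x₂‖ := by ring
  rw [div_mul_eq_mul_div, le_div_iff₀ hη₂]
  rcases (norm_nonneg (x₁ - x₂)).eq_or_lt with hzero | hpos
  · rw [← hzero, zero_mul]; positivity
  · nlinarith

end VariationalInequality

lemma summable_abs_of_inL1 {x : ltwo} (hx : inL1 x) : Summable fun i => |x i| := by
  simpa using (memℓp_gen_iff (p := 1) (by norm_num)).1 hx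

lemma convex_setOf_inL1 : Convex ℝ {x : ltwo | inL1 x} := by
  intro x hx y hy a b _ _ _
  exact (hx.const_smul a).add (hy.const_smul b)

lemma convexOn_l1norm : ConvexOn ℝ {x : ltwo | inL1 x} l1norm := by
  refine ⟨convex_setOf_inL1, fun x hx y hy a b ha hb _ => ?_⟩
  have hcoord : ∀ i, |(a • x + b • y) i| ≤ a * |x i| + b * |y i| := fun i => by
    show |a * x i + b * y i| ≤ _
    exact (abs_add_le _ _).trans_eq (by rw [abs_mul, abs_mul, abs_of_nonneg ha, abs_of_nonneg hb])
  have hsx := (summable_abs_of_inL1 hx).mul_left a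
  have hsy := (summable_abs_of_inL1 hy).mul_left b
  calc l1norm (a • x + b • y) ≤ ∑' i, (a * |x i| + b * |y i|) :=
        (summable_abs_of_inL1 (convex_setOf_inL1 hx hy ha hb ‹_›)).tsum_le_tsum hcoord
          (hsx.add hsy)
    _ = a • l1norm x + b • l1norm y := by
        rw [hsx.tsum_add hsy, tsum_mul_left, tsum_mul_left]; rfl

section RMinSolution

variable {H : Type*} [NormedAddCommGroup H] [InnerProductSpace ℝ H] {K : ltwo →L[ℝ] H} {ydag : H}

lemma convex_solutionSet : Convex ℝ {z : ltwo | inL1 z ∧ K z = ydag} :=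
  convex_setOf_inL1.inter ((convex_singleton ydag).linear_preimage K.toLinearMap)

lemma IsRMinSolution.norm_sub_le {η₁ η₂ : ℝ} {x₁ x₂ : ltwo}
    (h₁ : IsRMinSolution K ydag η₁ x₁) (h₂ : IsRMinSolution K ydag η₂ x₂)
    (hη₁ : 0 ≤ η₁) (hη₂ : 0 < η₂) : ‖x₁ - x₂‖ ≤ ‖x₂‖ / η₂ * |η₁ - η₂| :=
  norm_sub_le_of_isMinOn (convexOn_l1norm.subset (fun _ hz => hz.1) convex_solutionSet) hη₁ hη₂
    ⟨h₁.1, h₁.2.1⟩ ⟨h₂.1, h₂.2.1⟩ (fun z hz => h₁.2.2 z hz.1 hz.2) (fun z hz => h₂.2.2 z hz.1 hz.2)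

end RMinSolution

lemma exists_lipschitzOnWith_Ioi_inter_ball {E : Type*} [SeminormedAddCommGroup E] {f : ℝ → E}
    (hf : ∀ a b, 0 < a → 0 < b → ‖f a - f b‖ ≤ ‖f b‖ / b * |a - b|) {η : ℝ} (hη : 0 < η) :
    ∃ ε > (0 : ℝ), ∃ C : NNReal, LipschitzOnWith C f (Set.Ioi 0 ∩ Metric.ball η ε) := by
  have hnear : ∀ c ∈ Set.Ioi 0 ∩ Metric.ball η (η / 2), η / 2 < c ∧ ‖f c‖ ≤ 3 / 2 * ‖f η‖ := by
    rintro c ⟨hc, hcη⟩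
    rw [Metric.mem_ball, Real.dist_eq] at hcη
    refine ⟨by linarith [neg_abs_le (c - η)], ?_⟩
    calc ‖f c‖ ≤ ‖f η‖ + ‖f c - f η‖ := norm_le_insert' _ _
      _ ≤ ‖f η‖ + ‖f η‖ / η * (η / 2) := by gcongr; exact (hf c η hc hη).trans (by gcongr)
      _ = 3 / 2 * ‖f η‖ := by field_simp; ring
  refine ⟨η / 2, half_pos hη, (3 * ‖f η‖ / η).toNNReal, .of_dist_le_mul fun a ha b hb => ?_⟩
  obtain ⟨hb_low, hb_norm⟩ := hnear b hb
  rw [dist_eq_norm, Real.dist_eq, Real.coe_toNNReal _ (by positivity)]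
  calc ‖f a - f b‖ ≤ ‖f b‖ / b * |a - b| := hf a b ha.1 hb.1
    _ ≤ 3 / 2 * ‖f η‖ / (η / 2) * |a - b| := by gcongr
    _ = 3 * ‖f η‖ / η * |a - b| := by field_simp

/-- Local Lipschitz continuity of `η ↦ x_η` on `(0, ∞)`:
`‖x_{η₁} − x_{η₂}‖₂ ≤ min(‖x_{η₁}‖₂/η₁, ‖x_{η₂}‖₂/η₂)·|η₁ − η₂|`, and consequently
`η ↦ x_η` is locally Lipschitz on `(0, ∞)`. -/
theorem RMinSolution_locally_lipschitz
    {H : Type*} [NormedAddCommGroup H] [InnerProductSpace ℝ H]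
    (K : ltwo →L[ℝ] H) (ydag : H)
    (xsol : ℝ → ltwo) (hxsol : ∀ η : ℝ, 0 ≤ η → IsRMinSolution K ydag η (xsol η)) :
    (∀ η₁ η₂ : ℝ, 0 < η₁ → 0 < η₂ →
      ‖xsol η₁ - xsol η₂‖ ≤ min (‖xsol η₁‖ / η₁) (‖xsol η₂‖ / η₂) * |η₁ - η₂|) ∧
    (∀ η : ℝ, 0 < η → ∃ ε > (0 : ℝ), ∃ C : NNReal,
      LipschitzOnWith C xsol (Set.Ioi (0 : ℝ) ∩ Metric.ball η ε)) := by
  have hbound : ∀ a b, 0 < a → 0 < b → ‖xsol a - xsol b‖ ≤ ‖xsol b‖ / b * |a - b| :=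
    fun a b ha hb => (hxsol a ha.le).norm_sub_le (hxsol b hb.le) ha.le hb
  refine ⟨fun η₁ η₂ h₁ h₂ => ?_, fun η hη => exists_lipschitzOnWith_Ioi_inter_ball hbound hη⟩
  rw [min_mul_of_nonneg _ _ (abs_nonneg _)]
  refine le_min ?_ (hbound η₁ η₂ h₁ h₂)
  rw [norm_sub_rev, abs_sub_comm]
  exact hbound η₂ η₁ h₂ h₁
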